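/- Let A be a static constant game, π either player, and Γ and Δ legal runs of ⫰ᴸA such that Δ is a π-delay of Γ. If Γ is a π-won run of ⫰ᴸA, then Δ is a π-won run of ⫰ᴸA. -/

import Mathlib

/- ============================================================
   Computability Logic: runs, constant games, delays, static
   games, and the tight/loose toggling-branching recurrences.
   ============================================================ -/

/-- The two players: `top` (⊤, the machine) and `bot` (⊥, the environment). -/
inductive Player : Type
  | top : Player
  | bot : Player
deriving DecidableEq

/-- The adversary (opposite) of a player. -/
def Player.opp : Player → Player
  | .top => .bot
  | .bot => .top

/-- Symbols of the fixed move alphabet: the bits `0` and `1`, the period `.`,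
the colon `:`, and (countably many) other characters. -/
inductive CSym : Type
  | b0 : CSym
  | b1 : CSym
  | dot : CSym
  | colon : CSym
  | ch : ℕ → CSym
deriving DecidableEq

/-- A move is a finite string over the fixed alphabet. -/
abbrev Move := List CSym

/-- A labmove is a move together with the label of the player who made it. -/
abbrev Labmove := Player × Move

/-- A run is a finite or infinite sequence of labmoves. -/
abbrev Run := Stream'.Seq Labmove

/-- A position is a finite run. -/
abbrev Position := List Labmove

/-- The symbol encoding a bit. -/
def bitSym (b : Bool) : CSym := if b then .b1 else .b0

/-- The move that is the bare bitstring `w`. -/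
def bitsMove (w : List Bool) : Move := w.map bitSym

/-- The (replicative-style) move `w:`. -/
def repMove (w : List Bool) : Move := bitsMove w ++ [.colon]

/-- The (non-replicative-style) move `w.α`. -/
def dotMove (w : List Bool) (α : Move) : Move := bitsMove w ++ (.dot :: α)

/-- Decode a move that is a bare bitstring. -/
def asBits : Move → Option (List Bool)
  | [] => some []
  | .b0 :: r => (asBits r).map (false :: ·)
  | .b1 :: r => (asBits r).map (true :: ·)
  | _ => none

/-- Decode a move of the form `w:` (`w` a bitstring). -/
def asRep : Move → Option (List Bool)
  | [.colon] => some []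
  | .b0 :: r => (asRep r).map (false :: ·)
  | .b1 :: r => (asRep r).map (true :: ·)
  | _ => none

/-- Decode a move of the form `w.α` (`w` a bitstring, `α` a move), splitting at
the (unique such) period. -/
def splitDot : Move → Option (List Bool × Move)
  | .dot :: r => some ([], r)
  | .b0 :: r => (splitDot r).map (fun p => (false :: p.1, p.2))
  | .b1 :: r => (splitDot r).map (fun p => (true :: p.1, p.2))
  | _ => none

/-- Infinite bitstrings. -/
abbrev IStr := ℕ → Bool

/-- The length-`n` initial segment of an infinite bitstring. -/
def prefOf (n : ℕ) (v : IStr) : List Bool := (List.range n).map v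

/-- `u` is a finite initial segment of the infinite bitstring `v`. -/
def IsPref (u : List Bool) (v : IStr) : Prop := u = prefOf u.length v

instance (u : List Bool) (v : IStr) : Decidable (IsPref u v) := by
  unfold IsPref; infer_instance

/-- The finite bitstring `w` with infinitely many `0`s appended. -/
def ezero (w : List Bool) : IStr := fun i => w.getD i false

/-- The finite bitstring `w` followed by the infinite bitstring `v`. -/
def capp (w : List Bool) (v : IStr) : IStr :=
  fun i => if i < w.length then w.getD i false else v (i - w.length)

/-- The indices of `s` whose entry is kept by the filtering function `p`. -/
def fmPred {α β : Type*} (p : α → Option β) (s : Stream'.Seq α) (i : ℕ) : Prop :=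
  ∃ a, s.get? i = some a ∧ (p a).isSome

/-- `p` has at least `n+1` witnesses. -/
def HasNth (p : ℕ → Prop) (n : ℕ) : Prop :=
  ∀ hf : (setOf p).Finite, n < hf.toFinset.card

open Classical in
/-- The subsequence of a (finite or infinite) sequence obtained by
filtering/translating its entries through `p`. -/
noncomputable def seqFilterMap {α β : Type*} (p : α → Option β) (s : Stream'.Seq α) :
    Stream'.Seq β := by
  refine ⟨fun k => if HasNth (fmPred p s) k
    then ((s.get? (Nat.nth (fmPred p s) k)).bind p) else none, ?_⟩
  intro n hn
  have hval : ∀ k, HasNth (fmPred p s) k →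
      (if HasNth (fmPred p s) k then ((s.get? (Nat.nth (fmPred p s) k)).bind p) else none)
        ≠ none := by
    intro k hk
    obtain ⟨a, ha, hpa⟩ := Nat.nth_mem (p := fmPred p s) k hk
    rw [if_pos hk, ha]
    simpa [Option.isSome_iff_ne_none] using hpa
  by_cases h : HasNth (fmPred p s) (n + 1)
  · exact absurd hn (hval n (fun hf => lt_of_le_of_lt (Nat.le_succ n) (h hf)))
  · exact if_neg h

/-- The filtered subsequence of a position (finite-run analogue of `seqFilterMap`). -/
def listFilterMap {β : Type*} (p : Labmove → Option β) (Φ : Position) : List β :=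
  Φ.filterMap p

/-- The filtering function for `Ω^{≼v}`: keep labmoves `π u.α` with `u` an initial
segment of `v`, turning them into `π α`. -/
def subFn (v : IStr) (lm : Labmove) : Option Labmove :=
  match splitDot lm.2 with
  | some (u, α) => if IsPref u v then some (lm.1, α) else none
  | none => none

/-- `Ω^{≼v}` for a run `Ω`. -/
noncomputable def subAt (v : IStr) (Γ : Run) : Run := seqFilterMap (subFn v) Γ

/-- `Φ^{≼v}` for a position `Φ`. -/
def subAtL (v : IStr) (Φ : Position) : Position := Φ.filterMap (subFn v)

/-- The result of changing every label in a run to its opposite. -/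
def negRun (Γ : Run) : Run := Γ.map (fun lm => (lm.1.opp, lm.2))

/-- The subsequence of `π`-labeled moves of a run. -/
noncomputable def subseqOf (π : Player) (Γ : Run) : Run :=
  seqFilterMap (fun lm => if lm.1 = π then some lm else none) Γ

/-- The subsequence of `π`-labeled moves of a position. -/
def subL (π : Player) (Φ : Position) : Position :=
  Φ.filter (fun lm => decide (lm.1 = π))

/-- The indices of the `π`-labeled moves of a run. -/
def labPred (π : Player) (Γ : Run) (i : ℕ) : Prop := ∃ m, Γ.get? i = some (π, m)

/-- `Δ` is a `π`-delay of `Γ`: (1) for both players `π'`, the subsequence of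
`π'`-labeled moves of `Δ` is identical to that of `Γ`; (2) whenever the `n`-th
`π`-labeled move is made later than the `k`-th `¬π`-labeled move in `Γ`, so is
it in `Δ`. -/
def Delay (π : Player) (Δ Γ : Run) : Prop :=
  (∀ π' : Player, subseqOf π' Δ = subseqOf π' Γ) ∧
  (∀ n k : ℕ, HasNth (labPred π Γ) n → HasNth (labPred π.opp Γ) k →
    Nat.nth (labPred π Γ) n > Nat.nth (labPred π.opp Γ) k →
    Nat.nth (labPred π Δ) n > Nat.nth (labPred π.opp Δ) k)

/-- A constant game: a set of legal runs and an assignment of winners. -/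
structure Game where
  legal : Run → Prop
  wins : Run → Player

/-- Well-formedness of a constant game: the empty position is legal, and a run
is legal iff all of its finite initial segments are. -/
def Game.IsGame (A : Game) : Prop :=
  A.legal (Stream'.Seq.ofList []) ∧
  ∀ Γ : Run, A.legal Γ ↔ ∀ n : ℕ, A.legal (Stream'.Seq.ofList (Stream'.Seq.take n Γ))

/-- The run `Γ` is `π`-illegal in `A`: its shortest illegal initial segment has
the form `⟨Φ, πα⟩`. -/
def Game.IllegalBy (A : Game) (π : Player) (Γ : Run) : Prop :=
  ∃ n : ℕ,
    (∀ m ≤ n, A.legal (Stream'.Seq.ofList (Stream'.Seq.take m Γ))) ∧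
    ¬ A.legal (Stream'.Seq.ofList (Stream'.Seq.take (n + 1) Γ)) ∧
    ∃ m : Move, Γ.get? n = some (π, m)

/-- `Γ` is a `π`-won run of `A`: either `Γ` is legal and `Wn` names `π`, or `Γ`
is `¬π`-illegal (an illegal run is won by the adversary of the first offender). -/
def Game.won (A : Game) (π : Player) (Γ : Run) : Prop :=
  (A.legal Γ ∧ A.wins Γ = π) ∨ A.IllegalBy π.opp Γ

/-- A constant game is static iff `π`-won runs are preserved by `π`-delays. -/
def Game.Static (A : Game) : Prop :=
  ∀ (π : Player) (Γ Δ : Run), Delay π Δ Γ → A.won π Γ → A.won π Δ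

/-- The negation `¬A` of a constant game: the roles of the players are interchanged. -/
def Game.neg (A : Game) : Game where
  legal Γ := A.legal (negRun Γ)
  wins Γ := (A.wins (negRun Γ)).opp

/-- `w` is an actual node of the position `Φ`: `w` is empty, or `w = u0` or
`w = u1` for some bitstring `u` such that `Φ` contains the move `u:`. -/
def ActualNode (Φ : Position) (w : List Bool) : Prop :=
  w = [] ∨ ∃ (u : List Bool) (b : Bool), w = u ++ [b] ∧ ∃ π : Player, (π, repMove u) ∈ Φ

/-- `w` is an outer actual node of `Φ`: an actual node that is not a proper
prefix of any other actual node of `Φ`. -/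
def OuterNode (Φ : Position) (w : List Bool) : Prop :=
  ActualNode Φ w ∧ ∀ w' : List Bool, ActualNode Φ w' → w <+: w' → w = w'

/-- `m` is a legal move by `π` in the legal position `Φ` of `⫰ᵀA`: a switch
move, a replicative move, or a non-replicative move. -/
def TightMove (A : Game) (Φ : Position) (π : Player) (m : Move) : Prop :=
  (π = .bot ∧ ∃ w : List Bool, asBits m = some w ∧ ActualNode Φ w) ∨
  (π = .bot ∧ ∃ w : List Bool, asRep m = some w ∧ OuterNode Φ w) ∨
  (∃ (w : List Bool) (α : Move), splitDot m = some (w, α) ∧ ActualNode Φ w ∧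
    ∀ v : IStr, A.legal (Stream'.Seq.ofList (subAtL (capp w v) Φ ++ [(π, α)])))

/-- The legal positions of `⫰ᵀA`. -/
inductive TightLegalPos (A : Game) : Position → Prop
  | nil : TightLegalPos A []
  | snoc {Φ : Position} {π : Player} {m : Move} :
      TightLegalPos A Φ → TightMove A Φ π m → TightLegalPos A (Φ ++ [(π, m)])

/-- The indices of the switch moves (by player `π`) of a run: `π`-labeled moves
whose move part is a bare bitstring. -/
def SwSetP (π : Player) (Γ : Run) : Set ℕ :=
  {i | ∃ (m : Move) (w : List Bool), Γ.get? i = some (π, m) ∧ asBits m = some w}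

open Classical in
/-- The index of the last switch move (by `π`) of a run, when there are finitely
many and at least one (junk value `0` otherwise). -/
noncomputable def lastSwitchIdxP (π : Player) (Γ : Run) : ℕ :=
  if h : (SwSetP π Γ).Finite ∧ (SwSetP π Γ).Nonempty then
    h.1.toFinset.max' (h.1.toFinset_nonempty.mpr h.2)
  else 0

open Classical in
/-- The bitstring of the last switch move (by `π`) of a run; the empty bitstring
if there are no switch moves (or infinitely many). -/
noncomputable def lastSwitchBitsP (π : Player) (Γ : Run) : List Bool :=
  if (SwSetP π Γ).Finite ∧ (SwSetP π Γ).Nonempty then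
    ((Γ.get? (lastSwitchIdxP π Γ)).bind (fun lm => asBits lm.2)).getD []
  else []

/-- The infinite bitstring `t`: the last (`⊥`-made) switch move of `Γ` with
infinitely many `0`s appended, or the infinite string of `0`s if there are no
switch moves. -/
noncomputable def tStream (Γ : Run) : IStr := ezero (lastSwitchBitsP .bot Γ)

open Classical in
/-- The tight toggling-branching recurrence `⫰ᵀA`. -/
noncomputable def tight (A : Game) : Game where
  legal Γ := ∀ n : ℕ, TightLegalPos A (Stream'.Seq.take n Γ)
  wins Γ :=
    if (SwSetP .bot Γ).Finite ∧ A.won .bot (subAt (tStream Γ) Γ) then .bot else .top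

/-- The tight toggling-branching corecurrence `⫯ᵀA = ¬⫰ᵀ¬A`. -/
noncomputable def cotight (A : Game) : Game := Game.neg (tight (Game.neg A))

/-- The shape of legal labmoves of `⫰ᴸA`: `⊥w` (a switch move) for a bitstring
`w`, or `πw.α`. -/
def LooseShape (lm : Labmove) : Prop :=
  (lm.1 = .bot ∧ ∃ w : List Bool, asBits lm.2 = some w) ∨
  (∃ (w : List Bool) (α : Move), splitDot lm.2 = some (w, α))

open Classical in
/-- The loose toggling-branching recurrence `⫰ᴸA`. -/
noncomputable def loose (A : Game) : Game where
  legal Γ := (∀ (i : ℕ) (lm : Labmove), Γ.get? i = some lm → LooseShape lm) ∧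
    ∀ v : IStr, A.legal (subAt v Γ)
  wins Γ :=
    if (SwSetP .bot Γ).Finite ∧ A.won .bot (subAt (tStream Γ) Γ) then .bot else .top

/-- The loose toggling-branching corecurrence `⫯ᴸA = ¬⫰ᴸ¬A`. -/
noncomputable def coloose (A : Game) : Game := Game.neg (loose (Game.neg A))

/-- The sequence of (bitstrings of) switch moves made by `π` in a run, in order. -/
noncomputable def swSeq (π : Player) (Γ : Run) : Stream'.Seq (List Bool) :=
  seqFilterMap (fun lm => if lm.1 = π then asBits lm.2 else none) Γ

/-- The move `i.α` (component prefix for parallel combinations). -/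
def compMove (i : ℕ) (α : Move) : Move := .ch i :: .dot :: α

/-- `Δ^{i.}`: the labmoves of the form `π i.α` of `Δ`, with the prefix `i.` removed. -/
noncomputable def proj (i : ℕ) (Δ : Run) : Run :=
  seqFilterMap (fun lm =>
    match lm.2 with
    | .ch j :: .dot :: α => if j = i then some (lm.1, α) else none
    | _ => none) Δ

open Classical in
/-- The parallel disjunction `A ∨ B`. -/
noncomputable def Game.por (A B : Game) : Game where
  legal Δ :=
    (∀ (k : ℕ) (lm : Labmove), Δ.get? k = some lm →
      ∃ (i : ℕ) (α : Move), (i = 1 ∨ i = 2) ∧ lm.2 = compMove i α) ∧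
    A.legal (proj 1 Δ) ∧ B.legal (proj 2 Δ)
  wins Δ :=
    if A.won .top (proj 1 Δ) ∨ B.won .top (proj 2 Δ) then .top else .bot


/-!
A filter of a run that keeps or drops each labmove without changing its label, such as
`Ω ↦ Ω^{≼v}`, turns a `π`-delay into a `π`-delay: the position in the original run of the
`n`-th `π`-move of the filtered run is the position of a `π`-move whose rank depends only on the
`π`-subsequence, which a delay does not change. Switch moves are `⊥`-moves, so a delay does not
change their sequence either, hence neither their finiteness nor the branch `t`. Thus `Δ^{≼t}`
is a `π`-delay of `Γ^{≼t}` and staticity of `A` carries the winner over; for legal runs `won`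
reduces to `wins`, since legality passes to finite initial segments.
-/

section SeqFilterMap

open Classical Nat

variable {α β γ : Type*} {p : α → Option β} {q : β → Option γ} {s : Stream'.Seq α}

lemma hasNth_iff_exists_count {P : ℕ → Prop} {k : ℕ} :
    HasNth P k ↔ ∃ i, P i ∧ count P i = k :=
  ⟨fun h => ⟨nth P k, nth_mem k h, count_nth h⟩,
    fun ⟨_, hi, hk⟩ hf => hk ▸ count_lt_card hf hi⟩

lemma nth_lt_nth_iff_of_hasNth {P : ℕ → Prop} {m n : ℕ} (hm : HasNth P m) (hn : HasNth P n) :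
    nth P m < nth P n ↔ m < n :=
  ⟨fun h => lt_of_not_ge fun hle => (nth_le_nth' hle hm).not_gt h, fun h => nth_lt_nth' h hn⟩

lemma finite_iff_exists_not_hasNth {P : ℕ → Prop} :
    {i | P i}.Finite ↔ ∃ n, ¬ HasNth P n :=
  ⟨fun hf => ⟨_, fun h => lt_irrefl _ (h hf)⟩,
    fun ⟨_, hn⟩ => by_contra fun hinf => hn fun hf => absurd hf hinf⟩

lemma fmPred_iff_isSome {i : ℕ} : fmPred p s i ↔ ((s.get? i).bind p).isSome := by
  unfold fmPred
  cases s.get? i <;> simp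

lemma seqFilterMap_get? (p : α → Option β) (s : Stream'.Seq α) (k : ℕ) :
    (seqFilterMap p s).get? k =
      if HasNth (fmPred p s) k then (s.get? (nth (fmPred p s) k)).bind p else none :=
  rfl

lemma seqFilterMap_get?_eq_none {k : ℕ} :
    (seqFilterMap p s).get? k = none ↔ ¬ HasNth (fmPred p s) k := by
  rw [seqFilterMap_get?]
  split_ifs with h
  · have hk := fmPred_iff_isSome.1 (nth_mem k h)
    simp only [h, not_true, iff_false]
    rwa [← Ne, ← Option.isSome_iff_ne_none]
  · simpa using h

lemma seqFilterMap_get?_count {i : ℕ} (hi : fmPred p s i) :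
    (seqFilterMap p s).get? (count (fmPred p s) i) = (s.get? i).bind p := by
  rw [seqFilterMap_get?, if_pos (hasNth_iff_exists_count.2 ⟨i, hi, rfl⟩), nth_count hi]

lemma hasNth_of_fmPred_seqFilterMap {j : ℕ} (h : fmPred q (seqFilterMap p s) j) :
    HasNth (fmPred p s) j := by
  obtain ⟨b, hb, -⟩ := h
  by_contra hj
  rw [seqFilterMap_get?_eq_none.2 hj] at hb
  cases hb

lemma hasNth_nth_fmPred_seqFilterMap {m : ℕ} (h : HasNth (fmPred q (seqFilterMap p s)) m) :
    HasNth (fmPred p s) (nth (fmPred q (seqFilterMap p s)) m) :=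
  hasNth_of_fmPred_seqFilterMap (nth_mem m h)

lemma fmPred_bind_iff {i : ℕ} :
    fmPred (fun a => (p a).bind q) s i ↔
      fmPred p s i ∧ fmPred q (seqFilterMap p s) (count (fmPred p s) i) := by
  by_cases hi : fmPred p s i
  · simp only [hi, true_and, fmPred_iff_isSome, seqFilterMap_get?_count hi, Option.bind_assoc]
  · simp only [hi, false_and, iff_false]
    rw [fmPred_iff_isSome] at hi ⊢
    rw [← Option.bind_assoc, Option.not_isSome_iff_eq_none.1 hi]
    simp

lemma count_fmPred_bind (i : ℕ) :
    count (fmPred (fun a => (p a).bind q) s) i =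
      count (fmPred q (seqFilterMap p s)) (count (fmPred p s) i) := by
  induction i with
  | zero => simp
  | succ i ih =>
    rw [count_succ, ih, count_succ (fmPred p s)]
    by_cases hi : fmPred p s i
    · simp [fmPred_bind_iff, hi, count_succ]
    · simp [fmPred_bind_iff, hi]

lemma hasNth_fmPred_bind {n : ℕ} :
    HasNth (fmPred (fun a => (p a).bind q) s) n ↔ HasNth (fmPred q (seqFilterMap p s)) n := by
  simp only [hasNth_iff_exists_count]
  constructor
  · rintro ⟨i, hi, rfl⟩
    exact ⟨_, (fmPred_bind_iff.1 hi).2, (count_fmPred_bind i).symm⟩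
  · rintro ⟨j, hj, rfl⟩
    have hp := hasNth_of_fmPred_seqFilterMap hj
    exact ⟨_, fmPred_bind_iff.2 ⟨nth_mem j hp, by rwa [count_nth hp]⟩,
      by rw [count_fmPred_bind, count_nth hp]⟩

lemma nth_fmPred_bind {n : ℕ} (h : HasNth (fmPred q (seqFilterMap p s)) n) :
    nth (fmPred (fun a => (p a).bind q) s) n =
      nth (fmPred p s) (nth (fmPred q (seqFilterMap p s)) n) := by
  have hp := hasNth_nth_fmPred_seqFilterMap h
  have hi : fmPred (fun a => (p a).bind q) s
      (nth (fmPred p s) (nth (fmPred q (seqFilterMap p s)) n)) :=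
    fmPred_bind_iff.2 ⟨nth_mem _ hp, by rw [count_nth hp]; exact nth_mem n h⟩
  rw [← nth_count hi, count_fmPred_bind, count_nth hp, count_nth h]

lemma seqFilterMap_seqFilterMap :
    seqFilterMap q (seqFilterMap p s) = seqFilterMap (fun a => (p a).bind q) s := by
  ext1 k
  rw [seqFilterMap_get? q, seqFilterMap_get? (fun a => (p a).bind q), hasNth_fmPred_bind]
  split_ifs with h
  · rw [nth_fmPred_bind h, seqFilterMap_get?,
      if_pos (hasNth_nth_fmPred_seqFilterMap h), Option.bind_assoc]
  · rfl

end SeqFilterMap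

section Truncation

open Classical Nat

variable {α β : Type*} {p : α → Option β} {s : Stream'.Seq α} {n : ℕ}

lemma get?_ofList_take (s : Stream'.Seq α) (n i : ℕ) :
    (Stream'.Seq.ofList (s.take n)).get? i = if i < n then s.get? i else none := by
  rw [Stream'.Seq.ofList_get?, Stream'.Seq.getElem?_take]

lemma fmPred_ofList_take {i : ℕ} :
    fmPred p (Stream'.Seq.ofList (s.take n)) i ↔ i < n ∧ fmPred p s i := by
  unfold fmPred
  rw [get?_ofList_take]
  split_ifs with h <;> simp [h]

lemma count_fmPred_ofList_take {i : ℕ} (hi : i ≤ n) :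
    count (fmPred p (Stream'.Seq.ofList (s.take n))) i = count (fmPred p s) i := by
  induction i with
  | zero => simp
  | succ i ih =>
    rw [count_succ, count_succ, ih (by omega)]
    simp [fmPred_ofList_take, show i < n by omega]

lemma seqFilterMap_ofList_take :
    seqFilterMap p (Stream'.Seq.ofList (s.take n)) =
      Stream'.Seq.ofList ((seqFilterMap p s).take (count (fmPred p s) n)) := by
  ext1 k
  rw [get?_ofList_take, seqFilterMap_get?]
  by_cases hk : k < count (fmPred p s) n
  · have hP : HasNth (fmPred p s) k := fun hf => hk.trans_le (count_le_card hf n)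
    have hin : nth (fmPred p s) k < n := nth_lt_of_lt_count hk
    have hQi := fmPred_ofList_take.2 ⟨hin, nth_mem k hP⟩
    have hcount : count (fmPred p (Stream'.Seq.ofList (s.take n))) (nth (fmPred p s) k) = k := by
      rw [count_fmPred_ofList_take hin.le, count_nth hP]
    rw [if_pos (hasNth_iff_exists_count.2 ⟨_, hQi, hcount⟩), if_pos hk,
      (congrArg _ hcount).symm.trans (nth_count hQi), get?_ofList_take, if_pos hin,
      seqFilterMap_get?, if_pos hP]
  · rw [if_neg hk, if_neg]
    rintro hQ
    obtain ⟨i, hi, rfl⟩ := hasNth_iff_exists_count.1 hQ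
    obtain ⟨hin, hPi⟩ := fmPred_ofList_take.1 hi
    rw [count_fmPred_ofList_take hin.le] at hk
    exact hk (count_strict_mono hPi hin)

end Truncation

def labelFilter (π : Player) (lm : Labmove) : Option Labmove :=
  if lm.1 = π then some lm else none

def PreservesLabels (p : Labmove → Option Labmove) : Prop :=
  ∀ a b, p a = some b → b.1 = a.1

lemma labPred_eq_fmPred (π : Player) (Γ : Run) : labPred π Γ = fmPred (labelFilter π) Γ := by
  ext i
  constructor
  · rintro ⟨m, hm⟩
    exact ⟨(π, m), hm, by simp [labelFilter]⟩
  · rintro ⟨⟨ρ, m⟩, hm, hs⟩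
    by_cases h : ρ = π
    · exact ⟨m, h ▸ hm⟩
    · simp [labelFilter, h] at hs

namespace PreservesLabels

open Nat

variable {p : Labmove → Option Labmove} (hp : PreservesLabels p)
include hp

lemma labelFilter_bind_comm (ρ : Player) :
    (fun a => (labelFilter ρ a).bind p) = fun a => (p a).bind (labelFilter ρ) := by
  funext a
  cases h : p a with
  | none => by_cases ha : a.1 = ρ <;> simp [labelFilter, ha, h]
  | some b => by_cases ha : a.1 = ρ <;> simp [labelFilter, ha, h, hp a b h]

lemma subseqOf_seqFilterMap (ρ : Player) (Γ : Run) :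
    subseqOf ρ (seqFilterMap p Γ) = seqFilterMap p (subseqOf ρ Γ) := by
  change seqFilterMap (labelFilter ρ) _ = seqFilterMap p (seqFilterMap (labelFilter ρ) Γ)
  rw [seqFilterMap_seqFilterMap, seqFilterMap_seqFilterMap, hp.labelFilter_bind_comm]

lemma hasNth_labPred_seqFilterMap {ρ : Player} {Γ : Run} {m : ℕ} :
    HasNth (labPred ρ (seqFilterMap p Γ)) m ↔ HasNth (fmPred p (subseqOf ρ Γ)) m := by
  rw [labPred_eq_fmPred, ← hasNth_fmPred_bind, ← hp.labelFilter_bind_comm, hasNth_fmPred_bind]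
  rfl

lemma nth_labPred_seqFilterMap {ρ : Player} {Γ : Run} {m : ℕ}
    (h : HasNth (labPred ρ (seqFilterMap p Γ)) m) :
    nth (fmPred p Γ) (nth (labPred ρ (seqFilterMap p Γ)) m) =
      nth (labPred ρ Γ) (nth (fmPred p (subseqOf ρ Γ)) m) := by
  have h' : HasNth (fmPred p (seqFilterMap (labelFilter ρ) Γ)) m :=
    hp.hasNth_labPred_seqFilterMap.1 h
  rw [labPred_eq_fmPred] at h ⊢
  rw [labPred_eq_fmPred, ← nth_fmPred_bind h, ← hp.labelFilter_bind_comm, nth_fmPred_bind h']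
  rfl

theorem delay_seqFilterMap {π : Player} {Γ Δ : Run} (hd : Delay π Δ Γ) :
    Delay π (seqFilterMap p Δ) (seqFilterMap p Γ) := by
  refine ⟨fun ρ => by rw [hp.subseqOf_seqFilterMap, hp.subseqOf_seqFilterMap, hd.1], ?_⟩
  intro n k hn hk hlt
  have hΔ : ∀ {ρ m}, HasNth (labPred ρ (seqFilterMap p Γ)) m →
      HasNth (labPred ρ (seqFilterMap p Δ)) m := by
    intro ρ m h
    rwa [hp.hasNth_labPred_seqFilterMap, hd.1, ← hp.hasNth_labPred_seqFilterMap]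
  have hrun : ∀ {Ω ρ m}, HasNth (labPred ρ (seqFilterMap p Ω)) m →
      HasNth (fmPred p Ω) (nth (labPred ρ (seqFilterMap p Ω)) m) := by
    intro Ω ρ m h
    rw [labPred_eq_fmPred] at h ⊢
    exact hasNth_nth_fmPred_seqFilterMap h
  have hsub : ∀ {ρ m}, HasNth (labPred ρ (seqFilterMap p Γ)) m →
      HasNth (labPred ρ Γ) (nth (fmPred p (subseqOf ρ Γ)) m) := by
    intro ρ m h
    rw [labPred_eq_fmPred]
    exact hasNth_nth_fmPred_seqFilterMap (hp.hasNth_labPred_seqFilterMap.1 h)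
  rw [gt_iff_lt, ← nth_lt_nth_iff_of_hasNth (hrun hk) (hrun hn),
    hp.nth_labPred_seqFilterMap hn, hp.nth_labPred_seqFilterMap hk] at hlt
  rw [gt_iff_lt, ← nth_lt_nth_iff_of_hasNth (hrun (hΔ hk)) (hrun (hΔ hn)),
    hp.nth_labPred_seqFilterMap (hΔ hn), hp.nth_labPred_seqFilterMap (hΔ hk), hd.1, hd.1]
  exact hd.2 _ _ (hsub hn) (hsub hk) hlt

end PreservesLabels

def switchBits (π : Player) (lm : Labmove) : Option (List Bool) :=
  if lm.1 = π then asBits lm.2 else none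

lemma swSetP_eq (π : Player) (Γ : Run) : SwSetP π Γ = {i | fmPred (switchBits π) Γ i} := by
  ext i
  constructor
  · rintro ⟨m, w, hm, hw⟩
    exact ⟨(π, m), hm, by simp [switchBits, hw]⟩
  · rintro ⟨⟨ρ, m⟩, hm, hs⟩
    by_cases h : ρ = π
    · subst h
      obtain ⟨w, hw⟩ := Option.isSome_iff_exists.1 (by simpa [switchBits] using hs)
      exact ⟨m, w, hm, hw⟩
    · simp [switchBits, h] at hs

section Termination

open Classical Nat Stream'.Seq

variable {α β : Type*} {p : α → Option β} {s : Stream'.Seq α}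

lemma terminates_seqFilterMap_iff :
    (seqFilterMap p s).Terminates ↔ {i | fmPred p s i}.Finite := by
  simp only [finite_iff_exists_not_hasNth, Terminates, TerminatedAt, seqFilterMap_get?_eq_none]

lemma length_seqFilterMap (h : (seqFilterMap p s).Terminates) (hf : {i | fmPred p s i}.Finite) :
    (seqFilterMap p s).length h = hf.toFinset.card := by
  apply le_antisymm
  · exact length_le_iff.2 (seqFilterMap_get?_eq_none.2 fun hc => lt_irrefl _ (hc hf))
  · by_contra! hlt
    exact seqFilterMap_get?_eq_none.1 (length_le_iff.1 le_rfl) fun _ => hlt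

lemma count_max'_eq_card_sub_one {P : ℕ → Prop} (hf : {i | P i}.Finite)
    (hne : hf.toFinset.Nonempty) :
    count P (hf.toFinset.max' hne) = hf.toFinset.card - 1 := by
  have hM : P (hf.toFinset.max' hne) := hf.mem_toFinset.1 (hf.toFinset.max'_mem hne)
  have hcount : count P (hf.toFinset.max' hne + 1) = hf.toFinset.card := by
    rw [count_eq_card_filter_range]
    congr 1
    ext i
    simpa using fun hi => lt_succ_of_le (hf.toFinset.le_max' i (hf.mem_toFinset.2 hi))
  rw [count_succ, if_pos hM] at hcount
  omega

end Termination

open Classical in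
/-- With `0 - 1 = 0`, the right-hand side is also `[]` when there is no switch move. -/
lemma lastSwitchBitsP_eq_swSeq (π : Player) (Γ : Run) :
    lastSwitchBitsP π Γ = if h : (swSeq π Γ).Terminates
      then ((swSeq π Γ).get? ((swSeq π Γ).length h - 1)).getD [] else [] := by
  change _ = if h : (seqFilterMap (switchBits π) Γ).Terminates
    then ((seqFilterMap (switchBits π) Γ).get? (Stream'.Seq.length _ h - 1)).getD [] else []
  have hterm := terminates_seqFilterMap_iff (p := switchBits π) (s := Γ)
  simp only [lastSwitchBitsP, lastSwitchIdxP, swSetP_eq]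
  by_cases hfin : {i | fmPred (switchBits π) Γ i}.Finite
  · rw [dif_pos (hterm.2 hfin), length_seqFilterMap _ hfin]
    by_cases hne : {i | fmPred (switchBits π) Γ i}.Nonempty
    · rw [if_pos ⟨hfin, hne⟩, dif_pos ⟨hfin, hne⟩, ←
        count_max'_eq_card_sub_one hfin (hfin.toFinset_nonempty.2 hne)]
      have hM := hfin.mem_toFinset.1 (hfin.toFinset.max'_mem (hfin.toFinset_nonempty.2 hne))
      rw [seqFilterMap_get?_count hM]
      obtain ⟨a, ha, hs⟩ := hM
      have hπ : a.1 = π := by by_contra h; simp [switchBits, h] at hs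
      simp [ha, switchBits, hπ]
    · have hcard : hfin.toFinset.card = 0 := by simpa [Set.not_nonempty_iff_eq_empty] using hne
      rw [if_neg fun h => hne h.2, hcard,
        seqFilterMap_get?_eq_none.2 fun h => (h hfin).ne' hcard]
      rfl
  · rw [if_neg fun h => hfin h.1, dif_neg (mt hterm.1 hfin)]

namespace Delay

variable {ρ : Player} {Γ Δ : Run} (hd : Delay ρ Δ Γ)
include hd

lemma swSeq_eq (π : Player) : swSeq π Δ = swSeq π Γ := by
  have h : ∀ Ω, swSeq π Ω = seqFilterMap (fun lm => asBits lm.2) (subseqOf π Ω) := by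
    intro Ω
    change seqFilterMap (switchBits π) Ω = seqFilterMap _ (seqFilterMap (labelFilter π) Ω)
    rw [seqFilterMap_seqFilterMap]
    congr 1
    funext lm
    by_cases hlm : lm.1 = π <;> simp [switchBits, labelFilter, hlm]
  rw [h, h, hd.1]

lemma swSetP_finite_iff (π : Player) : (SwSetP π Δ).Finite ↔ (SwSetP π Γ).Finite := by
  rw [swSetP_eq, swSetP_eq, ← terminates_seqFilterMap_iff, ← terminates_seqFilterMap_iff]
  change (swSeq π Δ).Terminates ↔ (swSeq π Γ).Terminates
  rw [hd.swSeq_eq]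

lemma tStream_eq : tStream Δ = tStream Γ := by
  rw [tStream, tStream, lastSwitchBitsP_eq_swSeq, lastSwitchBitsP_eq_swSeq, hd.swSeq_eq]

end Delay

namespace Game

variable {A : Game} {Γ : Run}

lemma not_illegalBy_of_legal_take (h : ∀ n, A.legal (Stream'.Seq.ofList (Γ.take n)))
    (ρ : Player) : ¬ A.IllegalBy ρ Γ :=
  fun ⟨n, _, hn, _⟩ => hn (h (n + 1))

lemma won_iff_wins_eq (hΓ : A.legal Γ) (h : ∀ n, A.legal (Stream'.Seq.ofList (Γ.take n)))
    {π : Player} : A.won π Γ ↔ A.wins Γ = π :=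
  ⟨fun hw => hw.elim And.right fun hi => absurd hi (not_illegalBy_of_legal_take h _),
    fun hw => Or.inl ⟨hΓ, hw⟩⟩

lemma won_opp_iff_not_won (hΓ : A.legal Γ) (h : ∀ n, A.legal (Stream'.Seq.ofList (Γ.take n)))
    {π : Player} : A.won π.opp Γ ↔ ¬ A.won π Γ := by
  rw [won_iff_wins_eq hΓ h, won_iff_wins_eq hΓ h]
  cases π <;> cases A.wins Γ <;> decide

end Game

lemma subFn_preservesLabels (v : IStr) : PreservesLabels (subFn v) := by
  intro a b h
  unfold subFn at h
  split at h
  · split_ifs at h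
    cases h
    rfl
  · cases h

lemma loose_legal_ofList_take {A : Game} (hA : A.IsGame) {Γ : Run} (hΓ : (loose A).legal Γ)
    (n : ℕ) : (loose A).legal (Stream'.Seq.ofList (Γ.take n)) := by
  refine ⟨fun i lm hi => hΓ.1 i lm ?_, fun v => ?_⟩
  · rw [get?_ofList_take] at hi
    split_ifs at hi
    exact hi
  · change A.legal (seqFilterMap (subFn v) _)
    rw [seqFilterMap_ofList_take]
    exact (hA.2 _).1 (hΓ.2 v) _

lemma loose_wins_eq_bot_iff (A : Game) (Γ : Run) :
    (loose A).wins Γ = .bot ↔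
      (SwSetP .bot Γ).Finite ∧ A.won .bot (subAt (tStream Γ) Γ) := by
  simp only [loose]
  split_ifs with h <;> simp [h]

/-- Let `A` be a static constant game and let `Γ`, `Δ` be legal
runs of `⫰ᴸA` with `Δ` a `π`-delay of `Γ`. If `Γ` is a `π`-won run of `⫰ᴸA`, then
so is `Δ`. -/
theorem loose_won_of_delay (A : Game) (hA : A.IsGame) (hAs : A.Static)
    (π : Player) (Γ Δ : Run)
    (hΓ : (loose A).legal Γ) (hΔ : (loose A).legal Δ) (hd : Delay π Δ Γ)
    (hw : (loose A).won π Γ) :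
    (loose A).won π Δ := by
  rw [Game.won_iff_wins_eq hΓ (loose_legal_ofList_take hA hΓ)] at hw
  rw [Game.won_iff_wins_eq hΔ (loose_legal_ofList_take hA hΔ)]
  have hsub : Delay π (subAt (tStream Γ) Δ) (subAt (tStream Γ) Γ) :=
    (subFn_preservesLabels _).delay_seqFilterMap hd
  have hopp : ∀ Ω, (loose A).legal Ω →
      (A.won .top (subAt (tStream Γ) Ω) ↔ ¬ A.won .bot (subAt (tStream Γ) Ω)) :=
    fun Ω hΩ => Game.won_opp_iff_not_won (π := .bot) (hΩ.2 _) ((hA.2 _).1 (hΩ.2 _))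
  cases π with
  | bot =>
    rw [loose_wins_eq_bot_iff] at hw ⊢
    rw [hd.tStream_eq, hd.swSetP_finite_iff]
    exact ⟨hw.1, hAs _ _ _ hsub hw.2⟩
  | top =>
    have hne : ∀ x : Player, x = .top ↔ ¬ x = .bot := fun x => by cases x <;> decide
    rw [hne, loose_wins_eq_bot_iff] at hw ⊢
    rw [hd.tStream_eq, hd.swSetP_finite_iff]
    rintro ⟨hfin, hbot⟩
    exact (hopp Δ hΔ).1 (hAs _ _ _ hsub ((hopp Γ hΓ).2 fun h => hw ⟨hfin, h⟩)) hbot
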